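/- arXiv:2209.01684 — 2 statements merged into one kernel-verified Lean document; each statement's English description precedes it below -/
import Mathlib

section
/- For the ω-Subset Selection mechanism with the optimal subset size ω = k/(e^ε+1), the probability that a value v' ≠ v (the true value) lies in the reported subset Ω equals q = (ωe^ε(ω−1) + (k−ω)ω)/((k−1)(ωe^ε + k − ω)), while the true value lies in Ω with probability p = ωe^ε/(ωe^ε + k − ω), and p/q ≥ e^ε reduces to the SS privacy guarantee p(1−q')/(q(1−p')) form; in particular p > q whenever ω < k. -/
/-!
Averaging over whether the true value was kept, a fixed `v' ≠ v` is one of the remaining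
`ω - 1` or `ω` picks among `k - 1` values, so `q = (ω - p) / (k - 1)`; equivalently the expected
subset size is `p + (k - 1) q = ω`. Hence `q < p` iff `ω < k p`, i.e. iff the true value is kept
more often than under uniform sampling, and clearing denominators in `p` this is
`(e^ε - 1) (k - ω) > 0`.
-/

namespace SubsetSelection

theorem mixture_div_eq (p ω k : ℝ) :
    p * (ω - 1) / (k - 1) + (1 - p) * ω / (k - 1) = (ω - p) / (k - 1) := by
  ring

theorem sub_keepProb_div_eq {E k ω : ℝ} (hk : k ≠ 1) (hD : ω * E + k - ω ≠ 0) :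
    (ω - ω * E / (ω * E + k - ω)) / (k - 1) =
      (ω * E * (ω - 1) + (k - ω) * ω) / ((k - 1) * (ω * E + k - ω)) := by
  have hk' : k - 1 ≠ 0 := sub_ne_zero.2 hk
  field_simp
  ring

theorem sub_div_lt_iff {ω p k : ℝ} (hk : 1 < k) : (ω - p) / (k - 1) < p ↔ ω < k * p := by
  rw [div_lt_iff₀ (sub_pos.2 hk)]
  constructor <;> intro h <;> linarith

theorem lt_mul_keepProb {E k ω : ℝ} (hE : 1 < E) (hω : 0 < ω) (hωk : ω < k) :
    ω < k * (ω * E / (ω * E + k - ω)) := by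
  have hD : 0 < ω * E + k - ω := by nlinarith
  rw [mul_div_assoc', lt_div_iff₀ hD]
  nlinarith [mul_pos (mul_pos hω (sub_pos.2 hωk)) (sub_pos.2 hE)]

end SubsetSelection

open SubsetSelection in
/-- ω-Subset Selection: the probability that a value `v' ≠ v` lies in the reported
subset equals `q = (ω e^ε (ω-1) + (k-ω) ω)/((k-1)(ω e^ε + k - ω))`, where the true
value is included with probability `p = ω e^ε/(ω e^ε + k - ω)`; in particular
`q < p` whenever `ω < k`. -/
theorem ss_probs (ε k ω p q : ℝ) (hε : 0 < ε) (hω1 : 1 ≤ ω) (hωk : ω < k)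
    (hp : p = ω * Real.exp ε / (ω * Real.exp ε + k - ω))
    (hq : q = (ω * Real.exp ε * (ω - 1) + (k - ω) * ω) /
      ((k - 1) * (ω * Real.exp ε + k - ω))) :
    p * (ω - 1) / (k - 1) + (1 - p) * ω / (k - 1) = q ∧ q < p := by
  have hE : 1 < Real.exp ε := Real.one_lt_exp_iff.2 hε
  have hω : 0 < ω := by linarith
  have hk : 1 < k := hω1.trans_lt hωk
  have hD : 0 < ω * Real.exp ε + k - ω := by nlinarith
  have hq' : q = (ω - p) / (k - 1) := by
    rw [hq, hp, sub_keepProb_div_eq hk.ne' hD.ne']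
  rw [mixture_div_eq, hq']
  refine ⟨rfl, (sub_div_lt_iff hk).2 ?_⟩
  rw [hp]
  exact lt_mul_keepProb hE hω hωk
end

section
/- For the OUE mechanism on a domain of size k, the attacker's expected accuracy is ACC_OUE = (1/(2k))·(e^ε/(e^ε+1))^{k−1} + Σ_{i=1}^{k} (1/(2i))·Bin(i−1; k−1, 1/(e^ε+1)), where the attack reports the true value's bit if it is the unique 1, picks uniformly among 1-bits otherwise, and picks uniformly from the domain if no bit is 1. -/
/-- OUE attacker accuracy: with the one-hot input for `v` perturbed bitwise
(`p = 1/2` for the true bit, `q = 1/(e^ε+1)` for zero bits), the attacker who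
guesses uniformly among the 1-bits (or uniformly over the domain if none) succeeds
with probability
`(1/(2k))(e^ε/(e^ε+1))^{k-1} + Σ_{i=1}^k (1/(2i)) Bin(i-1; k-1, 1/(e^ε+1))`. -/
theorem oue_attacker_accuracy (ε : ℝ) (hε : 0 < ε) (k : ℕ) (hk : 2 ≤ k)
    (p q : ℝ) (hp : p = 1 / 2) (hq : q = 1 / (Real.exp ε + 1))
    (v : Fin k) (P : (Fin k → Bool) → ℝ)
    (hP : ∀ B, P B = ∏ i, if B i then (if i = v then p else q)
      else (if i = v then 1 - p else 1 - q)) :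
    (∑ B : Fin k → Bool, P B *
        (if (Finset.univ.filter (fun i => B i = true)).card = 0 then (1 / k : ℝ)
         else if B v then 1 / ((Finset.univ.filter (fun i => B i = true)).card : ℝ)
         else 0))
      = (1 / (2 * k)) * (Real.exp ε / (Real.exp ε + 1)) ^ (k - 1) +
        ∑ i ∈ Finset.Icc 1 k, (1 / (2 * i) : ℝ) *
          ((Nat.choose (k - 1) (i - 1) : ℝ) * (1 / (Real.exp ε + 1)) ^ (i - 1) *
            (1 - 1 / (Real.exp ε + 1)) ^ ((k - 1) - (i - 1))) := by
  classical
  have hE1 : (0:ℝ) < Real.exp ε + 1 := by positivity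
  have h1q : 1 - q = Real.exp ε / (Real.exp ε + 1) := by
    rw [hq]; field_simp; ring
  have hkpos : (0:ℕ) < k := by omega
  -- the equivalence between boolean functions and finsets
  let e : Finset (Fin k) ≃ (Fin k → Bool) :=
    { toFun := fun S i => decide (i ∈ S)
      invFun := fun B => Finset.univ.filter (fun i => B i = true)
      left_inv := fun S => by ext i; simp
      right_inv := fun B => by funext i; simp }
  rw [← Equiv.sum_comp e (fun B : Fin k → Bool => P B *
        (if (Finset.univ.filter (fun i => B i = true)).card = 0 then (1 / k : ℝ)
         else if B v then 1 / ((Finset.univ.filter (fun i => B i = true)).card : ℝ)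
         else 0))]
  have hfilter : ∀ S : Finset (Fin k),
      (Finset.univ.filter (fun i => e S i = true)) = S := by
    intro S; ext i; simp [e]
  have hcompl : ∀ S : Finset (Fin k), (Sᶜ).card = k - S.card := by
    intro S; rw [Finset.card_compl, Fintype.card_fin]
  have hterm : ∀ S : Finset (Fin k),
      P (e S) = (if v ∈ S then p * q ^ (S.card - 1) * (1-q) ^ (k - S.card)
        else (1-p) * q ^ S.card * (1-q) ^ (k - S.card - 1)) := by
    intro S
    rw [hP]
    have : ∀ i : Fin k, (if e S i then (if i = v then p else q)
        else (if i = v then 1 - p else 1 - q)) =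
        (if i ∈ S then (if i = v then p else q)
        else (if i = v then 1 - p else 1 - q)) := by
      intro i; simp [e]
    simp_rw [this]
    rw [Finset.prod_ite]
    have h1 : Finset.univ.filter (fun i : Fin k => i ∈ S) = S := by ext i; simp
    have h2 : Finset.univ.filter (fun i : Fin k => ¬ i ∈ S) = Sᶜ := by ext i; simp
    rw [h1, h2]
    by_cases hv : v ∈ S
    · rw [if_pos hv]
      have hvS : v ∉ Sᶜ := by simp [hv]
      rw [← Finset.mul_prod_erase S _ hv, if_pos rfl]
      have e1 : ∏ i ∈ S.erase v, (if i = v then p else q) = q ^ (S.card - 1) := by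
        rw [Finset.prod_congr rfl (fun i hi => if_neg (Finset.ne_of_mem_erase hi)),
          Finset.prod_const, Finset.card_erase_of_mem hv]
      have e2 : ∏ i ∈ Sᶜ, (if i = v then 1 - p else 1 - q) = (1-q) ^ (k - S.card) := by
        rw [Finset.prod_congr rfl (fun i hi => if_neg (by rintro rfl; exact hvS hi)),
          Finset.prod_const, hcompl]
      rw [e1, e2]
    · rw [if_neg hv]
      have hvS : v ∈ Sᶜ := by simp [hv]
      have e1 : ∏ i ∈ S, (if i = v then p else q) = q ^ S.card := by
        rw [Finset.prod_congr rfl (fun i hi => if_neg (by rintro rfl; exact hv hi)),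
          Finset.prod_const]
      have e2 : ∏ i ∈ Sᶜ, (if i = v then 1 - p else 1 - q) = (1-p) * (1-q) ^ (k - S.card - 1) := by
        rw [← Finset.mul_prod_erase _ _ hvS, if_pos rfl,
          Finset.prod_congr rfl (fun i hi => if_neg (Finset.ne_of_mem_erase hi)),
          Finset.prod_const, Finset.card_erase_of_mem hvS, hcompl]
      rw [e1, e2]; ring
  -- rewrite summand
  have hsummand : ∀ S : Finset (Fin k),
      (P (e S) *
        (if (Finset.univ.filter (fun i => e S i = true)).card = 0 then (1 / k : ℝ)
         else if e S v then 1 / ((Finset.univ.filter (fun i => e S i = true)).card : ℝ)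
         else 0)) =
      (if v ∈ S then p * q ^ (S.card - 1) * (1-q) ^ (k - S.card) * (1 / S.card)
        else (1-p) * q ^ S.card * (1-q) ^ (k - S.card - 1) *
          (if S.card = 0 then (1 / k : ℝ) else 0)) := by
    intro S
    rw [hterm, hfilter]
    by_cases hv : v ∈ S
    · have hc : S.card ≠ 0 := Finset.card_ne_zero_of_mem hv
      have hevt : e S v = true := by simp [e, hv]
      rw [if_pos hv, if_pos hv, if_neg hc, hevt, if_pos rfl]
    · rw [if_neg hv, if_neg hv]
      by_cases hc : S.card = 0
      · rw [if_pos hc, if_pos hc]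
      · have hevf : e S v = false := by simp [e, hv]
        rw [if_neg hc, if_neg hc, hevf, if_neg Bool.false_ne_true]
  rw [Finset.sum_congr rfl (fun S _ => hsummand S)]
  rw [← Finset.sum_filter_add_sum_filter_not Finset.univ (fun S => v ∈ S)]
  -- part B : v ∉ S
  have hB : ∑ S ∈ Finset.univ.filter (fun S : Finset (Fin k) => ¬ v ∈ S),
      (if v ∈ S then p * q ^ (S.card - 1) * (1-q) ^ (k - S.card) * (1 / S.card)
        else (1-p) * q ^ S.card * (1-q) ^ (k - S.card - 1) *
          (if S.card = 0 then (1 / k : ℝ) else 0)) =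
      (1 / (2 * k)) * (Real.exp ε / (Real.exp ε + 1)) ^ (k - 1) := by
    rw [Finset.sum_eq_single_of_mem (∅ : Finset (Fin k)) (by simp)]
    · simp only [Finset.notMem_empty, if_neg (by simp : ¬ v ∈ (∅ : Finset (Fin k))),
        Finset.card_empty, if_pos rfl, if_true, if_false, Nat.sub_zero]
      rw [hp, h1q]
      have : (0:ℝ) < (k:ℝ) := by exact_mod_cast hkpos
      field_simp
      ring
    · intro S hS hSne
      have hv : ¬ v ∈ S := (Finset.mem_filter.mp hS).2
      have hc : S.card ≠ 0 := fun h => hSne (Finset.card_eq_zero.mp h)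
      rw [if_neg hv, if_neg hc, mul_zero]
  -- part A : v ∈ S
  have hA : ∑ S ∈ Finset.univ.filter (fun S : Finset (Fin k) => v ∈ S),
      (if v ∈ S then p * q ^ (S.card - 1) * (1-q) ^ (k - S.card) * (1 / S.card)
        else (1-p) * q ^ S.card * (1-q) ^ (k - S.card - 1) *
          (if S.card = 0 then (1 / k : ℝ) else 0)) =
      ∑ i ∈ Finset.Icc 1 k, (1 / (2 * i) : ℝ) *
          ((Nat.choose (k - 1) (i - 1) : ℝ) * q ^ (i - 1) *
            (1 - q) ^ ((k - 1) - (i - 1))) := by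
    have step1 : ∑ S ∈ Finset.univ.filter (fun S : Finset (Fin k) => v ∈ S),
        (if v ∈ S then p * q ^ (S.card - 1) * (1-q) ^ (k - S.card) * (1 / S.card)
          else (1-p) * q ^ S.card * (1-q) ^ (k - S.card - 1) *
            (if S.card = 0 then (1 / k : ℝ) else 0)) =
        ∑ T ∈ (Finset.univ.erase v).powerset,
          (p * q ^ T.card * (1-q) ^ (k - 1 - T.card) * (1 / (T.card + 1))) := by
      apply Finset.sum_nbij' (fun S => S.erase v) (fun T => insert v T)
      · intro S hS
        simp only [Finset.mem_powerset]
        intro i hi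
        simp only [Finset.mem_erase] at hi ⊢
        exact ⟨hi.1, Finset.mem_univ i⟩
      · intro T hT
        simp only [Finset.mem_filter, Finset.mem_univ, true_and]
        exact Finset.mem_insert_self v T
      · intro S hS
        exact Finset.insert_erase (Finset.mem_filter.mp hS).2
      · intro T hT
        simp only [Finset.mem_powerset] at hT
        have : v ∉ T := fun h => (Finset.mem_erase.mp (hT h)).1 rfl
        exact Finset.erase_insert this
      · intro S hS
        have hv : v ∈ S := (Finset.mem_filter.mp hS).2
        rw [if_pos hv, Finset.card_erase_of_mem hv]
        have hc : 1 ≤ S.card := Finset.card_pos.mpr ⟨v, hv⟩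
        have h1 : S.card - 1 + 1 = S.card := by omega
        have h2 : k - 1 - (S.card - 1) = k - S.card := by
          have := Finset.card_le_univ S
          simp only [Finset.card_univ, Fintype.card_fin] at this
          omega
        rw [h2, Nat.cast_sub hc]
        norm_num
    rw [step1, Finset.sum_powerset]
    have hcard : (Finset.univ.erase v).card = k - 1 := by
      rw [Finset.card_erase_of_mem (Finset.mem_univ v), Finset.card_univ, Fintype.card_fin]
    rw [hcard]
    have hk1 : k - 1 + 1 = k := by omega
    rw [hk1]
    have step2 : ∀ j ∈ Finset.range k,
        ∑ T ∈ Finset.powersetCard j (Finset.univ.erase v),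
          (p * q ^ T.card * (1-q) ^ (k - 1 - T.card) * (1 / (T.card + 1))) =
        ((k-1).choose j : ℝ) * (p * q ^ j * (1-q) ^ (k - 1 - j) * (1 / (j + 1))) := by
      intro j hj
      rw [Finset.sum_congr rfl (fun T hT => by
        rw [(Finset.mem_powersetCard.mp hT).2]), Finset.sum_const,
        Finset.card_powersetCard, hcard, nsmul_eq_mul]
    rw [Finset.sum_congr rfl step2]
    have : Finset.Icc 1 k = Finset.Ico 1 (k+1) := by
      rw [Finset.Ico_add_one_right_eq_Icc]
    rw [this, Finset.sum_Ico_eq_sum_range]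
    simp only [Nat.add_sub_cancel]
    apply Finset.sum_congr rfl
    intro j hj
    have h1 : 1 + j - 1 = j := by omega
    rw [h1, hp]
    have hj1 : (0:ℝ) < (j:ℝ) + 1 := by positivity
    push_cast
    field_simp
    ring
  rw [hA, hB, hq]
  ring
end
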